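/- Suppose (μ, m) has critical root structure with roots 0 < t_1 < … < t_k < 1 of orders v_1, …, v_k. Then there exist constants M > 0 and h₀ > 0 such that for every h ∈ (0, h₀]: {s ∈ [0,1] : |μ(s) − m| ≤ h} = ⋃_{l=1}^{k} B_{h,l,M}, where B_{h,l,M} = {s ∈ [0,1] : |s − t_l|^{v_l+1} ≤ M·h and |μ(s) − m| ≤ h}. -/

import Mathlib

/-!
Near a root `t_l`, Taylor's theorem in Peano form gives `|μ s - m| ≥ c_l |s - t_l|^(v_l+1)`,
because the first `v_l` derivatives vanish at `t_l` and the next one does not. On the rest of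
the `γ`-neighbourhood `μ - m` is continuous and, by strict monotonicity, vanishes only at `t_l`,
so away from `t_l` it is bounded below by compactness; outside all `γ`-neighbourhoods it is at
least `ε` by assumption. Hence for `h` below all these thresholds every point of the band lies
in the Taylor regime of some root, where `|s - t_l|^(v_l+1) ≤ h / c_l ≤ M h` with
`M = ∑ l, 1 / c_l`.
-/

open MeasureTheory Set

/-- The extended root sequence: `t₀ = 0`, `t_{k+1} = 1`, and the given roots in between. -/
noncomputable def extRoots (k : ℕ) (t : ℕ → ℝ) : ℕ → ℝ :=
  fun i => if i = 0 then 0 else if i ≤ k then t i else 1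

/-- `(μ, m)` has critical root structure with roots `0 < t 1 < … < t k < 1` of orders
`v 1, …, v k` and gap parameter `γ = (1/2)·min_{0 ≤ i ≤ k} (t_{i+1} - t_i)`
(with the convention `t 0 = 0`, `t (k+1) = 1`). -/
structure CriticalRootStructure (μ : ℝ → ℝ) (m : ℝ) (k : ℕ) (t : ℕ → ℝ)
    (v : ℕ → ℕ) (γ : ℝ) : Prop where
  k_pos : 0 < k
  mono : ∀ i j, 1 ≤ i → i < j → j ≤ k → t i < t j
  first_pos : 0 < t 1
  last_lt : t k < 1
  gamma_eq : γ = (1 / 2) * ((Finset.Icc 0 k).inf' (Finset.nonempty_Icc.mpr (Nat.zero_le k))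
      fun i => extRoots k t (i + 1) - extRoots k t i)
  root : ∀ l, 1 ≤ l → l ≤ k → μ (t l) = m
  -- (i) μ is (v l + 1)-times differentiable on [t l - γ, t l + γ] ...
  diffble : ∀ l, 1 ≤ l → l ≤ k → ∀ j ≤ v l,
      DifferentiableOn ℝ (iteratedDerivWithin j μ (Icc (t l - γ) (t l + γ)))
        (Icc (t l - γ) (t l + γ))
  -- ... with μ^{(j)}(t l) = 0 for 1 ≤ j ≤ v l ...
  deriv_zero : ∀ l, 1 ≤ l → l ≤ k → ∀ j, 1 ≤ j → j ≤ v l →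
      iteratedDerivWithin j μ (Icc (t l - γ) (t l + γ)) (t l) = 0
  -- ... μ^{(v l + 1)}(t l) ≠ 0 ...
  deriv_ne : ∀ l, 1 ≤ l → l ≤ k →
      iteratedDerivWithin (v l + 1) μ (Icc (t l - γ) (t l + γ)) (t l) ≠ 0
  -- ... and μ^{(v l + 1)} Lipschitz continuous on [t l - γ, t l + γ].
  deriv_lip : ∀ l, 1 ≤ l → l ≤ k → ∃ C : NNReal,
      LipschitzOnWith C (iteratedDerivWithin (v l + 1) μ (Icc (t l - γ) (t l + γ)))
        (Icc (t l - γ) (t l + γ))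
  -- (ii) μ strictly monotone on [t l - γ, t l] and on [t l, t l + γ].
  mono_left : ∀ l, 1 ≤ l → l ≤ k →
      StrictMonoOn μ (Icc (t l - γ) (t l)) ∨ StrictAntiOn μ (Icc (t l - γ) (t l))
  mono_right : ∀ l, 1 ≤ l → l ≤ k →
      StrictMonoOn μ (Icc (t l) (t l + γ)) ∨ StrictAntiOn μ (Icc (t l) (t l + γ))
  -- (iii) |μ - m| bounded away from 0 outside the γ-neighbourhoods of the roots.
  sep : ∃ ε > 0, ∀ s ∈ Icc (0:ℝ) 1,
      (∀ l, 1 ≤ l → l ≤ k → γ < |s - t l|) → ε ≤ |μ s - m|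

open Filter Topology Metric
open scoped Nat

theorem taylorWithinEval_eq_of_iteratedDerivWithin_eq_zero {f : ℝ → ℝ} {s : Set ℝ}
    {x₀ x : ℝ} {n : ℕ} (hzero : ∀ j, 1 ≤ j → j ≤ n → iteratedDerivWithin j f s x₀ = 0) :
    taylorWithinEval f n s x₀ x = f x₀ := by
  induction n with
  | zero => exact taylor_within_zero_eval f s x₀ x
  | succ n ih =>
    rw [taylorWithinEval_succ, ih fun j hj hjn => hzero j hj (by omega),
      hzero (n + 1) (by omega) le_rfl, smul_zero, add_zero]

theorem exists_pos_eventually_mul_pow_le_abs_sub {f : ℝ → ℝ} {s : Set ℝ} {x₀ : ℝ} {n : ℕ}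
    (hs : Convex ℝ s) (hx₀ : x₀ ∈ s) (hf : ContDiffOn ℝ (n + 1) f s)
    (hzero : ∀ j, 1 ≤ j → j ≤ n → iteratedDerivWithin j f s x₀ = 0)
    (hne : iteratedDerivWithin (n + 1) f s x₀ ≠ 0) :
    ∃ c > 0, ∀ᶠ x in 𝓝[s] x₀, c * |x - x₀| ^ (n + 1) ≤ |f x - f x₀| := by
  set D := iteratedDerivWithin (n + 1) f s x₀
  have ha : 0 < |D| / (n + 1)! := by have := abs_pos.mpr hne; positivity
  refine ⟨|D| / (n + 1)! / 2, half_pos ha, ?_⟩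
  filter_upwards [(taylor_isLittleO hs hx₀ hf).def (half_pos ha)] with x hx
  have hleading :
      |taylorWithinEval f (n + 1) s x₀ x - f x₀| = |D| / (n + 1)! * |x - x₀| ^ (n + 1) := by
    rw [taylorWithinEval_succ, taylorWithinEval_eq_of_iteratedDerivWithin_eq_zero hzero,
      add_sub_cancel_left, smul_eq_mul, abs_mul, abs_mul, abs_inv, abs_pow, Nat.factorial_succ]
    push_cast
    rw [abs_of_pos (by positivity)]
    ring
  simp only [Real.norm_eq_abs, abs_pow] at hx
  have htri := abs_sub_le (taylorWithinEval f (n + 1) s x₀ x) (f x) (f x₀)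
  rw [abs_sub_comm _ (f x)] at htri
  linarith

theorem exists_pos_forall_abs_sub_lt_of_eventually {X : Type*} [TopologicalSpace X]
    {f : X → ℝ} {K : Set X} {x₀ : X} {P : X → Prop} (hK : IsCompact K)
    (hf : ContinuousOn f K) (hx₀ : ∀ x ∈ K, f x = f x₀ → x = x₀) (hP : ∀ᶠ x in 𝓝 x₀, P x) :
    ∃ e > 0, ∀ x ∈ K, |f x - f x₀| < e → P x := by
  obtain ⟨U, hPU, hU, hx₀U⟩ := eventually_nhds_iff.mp hP
  have hpos : ∀ x ∈ K \ U, 0 < |f x - f x₀| := fun x hx =>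
    abs_pos.mpr (sub_ne_zero.mpr fun h => hx.2 (hx₀ x hx.1 h ▸ hx₀U))
  obtain ⟨e, he, hle⟩ := (hK.diff hU).exists_forall_le'
    ((hf.mono sdiff_subset).sub continuousOn_const).abs hpos
  refine ⟨e, he, fun x hxK hlt => ?_⟩
  by_contra hnP
  exact (hle x ⟨hxK, fun hxU => hnP (hPU x hxU)⟩).not_gt hlt

namespace CriticalRootStructure

variable {μ : ℝ → ℝ} {m : ℝ} {k : ℕ} {t : ℕ → ℝ} {v : ℕ → ℕ} {γ : ℝ}

theorem extRoots_lt_extRoots_succ (hcrs : CriticalRootStructure μ m k t v γ)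
    {i : ℕ} (hi : i ≤ k) :
    extRoots k t i < extRoots k t (i + 1) := by
  rcases Nat.eq_zero_or_pos i with rfl | hi0
  · simpa [extRoots, Nat.one_le_of_lt hcrs.k_pos] using hcrs.first_pos
  rcases hi.lt_or_eq with hik | rfl
  · simpa [extRoots, hi0.ne', hi, hik] using hcrs.mono i (i + 1) hi0 (lt_add_one i) hik
  · simpa [extRoots, hi0.ne'] using hcrs.last_lt

theorem gamma_pos (hcrs : CriticalRootStructure μ m k t v γ)
    : 0 < γ := by
  rw [hcrs.gamma_eq]
  exact mul_pos one_half_pos <| (Finset.lt_inf'_iff _).mpr fun i hi =>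
    sub_pos.mpr (hcrs.extRoots_lt_extRoots_succ (Finset.mem_Icc.mp hi).2)

theorem contDiffOn (hcrs : CriticalRootStructure μ m k t v γ)
    {l : ℕ} (hl1 : 1 ≤ l) (hlk : l ≤ k) :
    ContDiffOn ℝ (v l + 1) μ (closedBall (t l) γ) := by
  rw [Real.closedBall_eq_Icc]
  obtain ⟨C, hC⟩ := hcrs.deriv_lip l hl1 hlk
  have h := contDiffOn_of_continuousOn_differentiableOn_deriv (n := (v l + 1 : ℕ))
    (fun j hj => ?_) (fun j hj => (hcrs.diffble l hl1 hlk j (by norm_cast at hj; omega)))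
  · exact_mod_cast h
  · rcases (show j ≤ v l ∨ j = v l + 1 by norm_cast at hj; omega) with hj | rfl
    · exact (hcrs.diffble l hl1 hlk j hj).continuousOn
    · exact hC.continuousOn

theorem eq_of_apply_eq (hcrs : CriticalRootStructure μ m k t v γ)
    {l : ℕ} (hl1 : 1 ≤ l) (hlk : l ≤ k) {s : ℝ}
    (hs : s ∈ closedBall (t l) γ) (hμs : μ s = μ (t l)) : s = t l := by
  rw [Real.closedBall_eq_Icc] at hs
  rcases le_total s (t l) with hsl | hls
  · exact (hcrs.mono_left l hl1 hlk).elim (·.injOn) (·.injOn) ⟨hs.1, hsl⟩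
      ⟨by linarith [hcrs.gamma_pos], le_rfl⟩ hμs
  · exact (hcrs.mono_right l hl1 hlk).elim (·.injOn) (·.injOn) ⟨hls, hs.2⟩
      ⟨le_rfl, by linarith [hcrs.gamma_pos]⟩ hμs

theorem exists_local_lower_bound (hcrs : CriticalRootStructure μ m k t v γ)
    {l : ℕ} (hl1 : 1 ≤ l) (hlk : l ≤ k) :
    ∃ c > 0, ∃ e > 0, ∀ s, |s - t l| ≤ γ → |μ s - m| < e →
      c * |s - t l| ^ (v l + 1) ≤ |μ s - m| := by
  have hγ := hcrs.gamma_pos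
  have hroot := hcrs.root l hl1 hlk
  have hf := hcrs.contDiffOn hl1 hlk
  obtain ⟨c, hc, hnear⟩ := exists_pos_eventually_mul_pow_le_abs_sub (convex_closedBall _ _)
    (mem_closedBall_self hγ.le) hf
    (by simpa only [Real.closedBall_eq_Icc] using hcrs.deriv_zero l hl1 hlk)
    (by simpa only [Real.closedBall_eq_Icc] using hcrs.deriv_ne l hl1 hlk)
  rw [nhdsWithin_eq_nhds.mpr (closedBall_mem_nhds _ hγ)] at hnear
  obtain ⟨e, he, hlocal⟩ := exists_pos_forall_abs_sub_lt_of_eventually (isCompact_closedBall _ _)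
    hf.continuousOn (fun s hs => hcrs.eq_of_apply_eq hl1 hlk hs) hnear
  refine ⟨c, hc, e, he, fun s hs => ?_⟩
  simpa only [hroot] using hlocal s (by rwa [mem_closedBall, Real.dist_eq])

end CriticalRootStructure

/-- Lemma B.1, decomposition: for small `h` the level-set band is the union
of the pieces `B_{h,l,M}` localized at the roots. -/
theorem level_set_band_decomposition
    (μ : ℝ → ℝ) (m : ℝ) (k : ℕ) (t : ℕ → ℝ) (v : ℕ → ℕ) (γ : ℝ)
    (hcrs : CriticalRootStructure μ m k t v γ) :
    ∃ M > (0:ℝ), ∃ h₀ > (0:ℝ), ∀ h ∈ Ioc (0:ℝ) h₀,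
      {s ∈ Icc (0:ℝ) 1 | |μ s - m| ≤ h} =
        ⋃ l ∈ Finset.Icc 1 k,
          {s ∈ Icc (0:ℝ) 1 | |s - t l| ^ (v l + 1) ≤ M * h ∧ |μ s - m| ≤ h} := by
  choose! c hc e he hlocal using fun l (hl : l ∈ Finset.Icc 1 k) =>
    hcrs.exists_local_lower_bound (Finset.mem_Icc.mp hl).1 (Finset.mem_Icc.mp hl).2
  obtain ⟨ε, hε, hsep⟩ := hcrs.sep
  have hsmall : ∀ᶠ h in 𝓝 (0 : ℝ), h < ε ∧ ∀ l ∈ Finset.Icc 1 k, h < e l :=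
    (eventually_lt_nhds hε).and <|
      (eventually_all_finset _).2 fun l hl => eventually_lt_nhds (he l hl)
  obtain ⟨h₀, ⟨hh₀ε, hh₀e⟩, hh₀⟩ :=
    ((hsmall.filter_mono nhdsWithin_le_nhds).and (self_mem_nhdsWithin (s := Ioi 0))).exists
  refine ⟨∑ l ∈ Finset.Icc 1 k, (c l)⁻¹, Finset.sum_pos (fun l hl => inv_pos.mpr (hc l hl))
    ⟨1, Finset.mem_Icc.mpr ⟨le_rfl, hcrs.k_pos⟩⟩, h₀, hh₀, fun h ⟨hh, hhh₀⟩ => ?_⟩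
  ext s
  simp only [mem_sep_iff, mem_iUnion, exists_prop]
  refine ⟨fun ⟨hs, hband⟩ => ?_, fun ⟨_, _, hs, _, hband⟩ => ⟨hs, hband⟩⟩
  obtain ⟨l, hl, hsl⟩ : ∃ l ∈ Finset.Icc 1 k, |s - t l| ≤ γ := by
    by_contra! hfar
    have := hsep s hs fun l hl1 hlk => hfar l (Finset.mem_Icc.mpr ⟨hl1, hlk⟩)
    linarith
  have hlow := hlocal l hl s hsl (by linarith [hh₀e l hl])
  refine ⟨l, hl, hs, ?_, hband⟩
  calc |s - t l| ^ (v l + 1) ≤ (c l)⁻¹ * h := by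
        rw [inv_mul_eq_div, le_div_iff₀' (hc l hl)]; linarith
    _ ≤ _ := mul_le_mul_of_nonneg_right
        (Finset.single_le_sum (fun i hi => (inv_pos.mpr (hc i hi)).le) hl) hh.le
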